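/- Every hereditarily Lindelöf topological space has the generalized Bolzano–Weierstrass property: if X is a topological space all of whose subspaces are Lindelöf, then every sequence (Kₙ)_{n∈ℕ} of subsets of X has a subsequence that converges in the sense of Kuratowski. -/

import Mathlib

open Set Topology TopologicalSpace

/-- Lower closed limit (Kuratowski) of the subsequence of `K` indexed by the
infinite set `A ⊆ ℕ`, with respect to the topology `t`: points all of whose
open neighborhoods meet `K n` for all but finitely many `n ∈ A`. -/
def kurLi {X : Type*} (t : TopologicalSpace X) (K : ℕ → Set X) (A : Set ℕ) : Set X :=
  {x | ∀ U : Set X, IsOpen[t] U → x ∈ U → {n ∈ A | U ∩ K n = ∅}.Finite}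

/-- Upper closed limit (Kuratowski): points all of whose open neighborhoods
meet `K n` for infinitely many `n ∈ A`. -/
def kurLs {X : Type*} (t : TopologicalSpace X) (K : ℕ → Set X) (A : Set ℕ) : Set X :=
  {x | ∀ U : Set X, IsOpen[t] U → x ∈ U → {n ∈ A | (U ∩ K n).Nonempty}.Infinite}

/-- A family of subsets of `ℕ` is splitting if every infinite `A ⊆ ℕ` is split
by some member of the family. -/
def IsSplittingFamily (S : Set (Set ℕ)) : Prop :=
  ∀ A : Set ℕ, A.Infinite → ∃ s ∈ S, (A ∩ s).Infinite ∧ (A \ s).Infinite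

/-!
Suppose no subsequence converges. For each infinite `A ⊆ ℕ` there is an open set `U A` containing
a point of `Ls A` and missing `K n` for the infinitely many `n` of some `N A ⊆ A`. Countably many
infinite sets that are almost decreasing (finite differences) have an infinite pseudo-intersection,
so transfinite recursion yields infinite `T α`, `α < ω₁`, with `T α \ N (T β)` finite for `β < α`.
A point of `Ls (T α)` then lies in no `U (T β)` with `β < α`, so no `U (T α)` is covered by the
earlier ones. But a countable subcover of `⋃ α < ω₁, U (T α)` only uses indices below some
`α < ω₁`, which contradicts hereditary Lindelöfness.
-/

open Ordinal

theorem exists_infinite_diff_finite_of_biInter_infinite {C : ℕ → Set ℕ}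
    (h : ∀ i, (⋂ j ≤ i, C j).Infinite) : ∃ B : Set ℕ, B.Infinite ∧ ∀ i, (B \ C i).Finite := by
  choose n hnC hn using fun i => (h i).exists_gt i
  refine ⟨range n, infinite_of_not_bddAbove fun ⟨M, hM⟩ => (hn M).not_ge (hM ⟨M, rfl⟩), fun i => ?_⟩
  refine ((finite_Iio i).image n).subset ?_
  rintro _ ⟨⟨j, rfl⟩, hj⟩
  exact ⟨j, lt_of_not_ge fun hij => hj (mem_iInter₂.1 (hnC j) i hij), rfl⟩

theorem exists_infinite_diff_finite_of_countable {ι : Type*} [LinearOrder ι] {C : ι → Set ℕ}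
    {s : Set ι} (hs : s.Countable) (hinf : ∀ i ∈ s, (C i).Infinite)
    (hchain : ∀ i ∈ s, ∀ j ∈ s, i ≤ j → (C j \ C i).Finite) :
    ∃ B : Set ℕ, B.Infinite ∧ ∀ i ∈ s, (B \ C i).Finite := by
  rcases s.eq_empty_or_nonempty with rfl | hne
  · exact ⟨univ, infinite_univ, by simp⟩
  obtain ⟨f, rfl⟩ := hs.exists_eq_range hne
  suffices ∀ i, (⋂ j ≤ i, C (f j)).Infinite by
    obtain ⟨B, hB, hBC⟩ := exists_infinite_diff_finite_of_biInter_infinite this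
    exact ⟨B, hB, forall_mem_range.2 hBC⟩
  intro i
  obtain ⟨k, -, hmax⟩ := (Finset.range (i + 1)).exists_max_image f ⟨0, by simp⟩
  have hfin : (⋃ j ≤ i, C (f k) \ C (f j)).Finite :=
    (finite_Iic i).biUnion fun j hj => hchain _ (mem_range_self j) _ (mem_range_self k)
      (hmax j (by simpa [Nat.lt_succ_iff] using hj))
  refine ((hinf _ (mem_range_self k)).sdiff hfin).mono ?_
  rintro m ⟨hm, hm'⟩
  refine mem_iInter₂.2 fun j hj => ?_
  by_contra hmj
  exact hm' (mem_biUnion hj ⟨hm, hmj⟩)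

theorem countable_Iio_of_lt_omega_one {α : Ordinal} (hα : α < ω₁) : (Iio α).Countable := by
  rw [← Cardinal.le_aleph0_iff_set_countable, Cardinal.mk_Iio_ordinal, Cardinal.lift_le_aleph0,
    ← Cardinal.lt_aleph_one_iff, ← Cardinal.lt_omega_iff_card_lt]
  exact hα

theorem exists_subset_biUnion_lt_of_isLindelof {X : Type*} [TopologicalSpace X]
    {U : Ordinal → Set X} (hU : ∀ α, IsOpen (U α)) (hL : IsLindelof (⋃ α < ω₁, U α)) :
    ∃ α < ω₁, U α ⊆ ⋃ β < α, U β := by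
  obtain ⟨r, hr, hcov⟩ := hL.elim_countable_subcover (fun α : Iio ω₁ => U α) (fun _ => hU _)
    (iUnion₂_subset fun α hα => subset_iUnion_of_subset ⟨α, hα⟩ subset_rfl)
  have : Countable r := hr.to_subtype
  set δ := Order.succ (⨆ i : r, (i.1 : Ordinal))
  have hδ : δ < ω₁ :=
    (Cardinal.isSuccLimit_omega 1).succ_lt (Ordinal.iSup_lt_omega_one fun i => i.1.2)
  refine ⟨δ, hδ, fun x hx => ?_⟩
  obtain ⟨i, hi, hxi⟩ := mem_iUnion₂.1 (hcov (mem_biUnion hδ hx))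
  exact mem_biUnion (Order.lt_succ_of_le (Ordinal.le_iSup _ (⟨i, hi⟩ : r))) hxi

/-- Stage `α` is an infinite set almost contained in `N` of every earlier stage, if there is one
(otherwise `Classical.epsilon` returns junk). -/
noncomputable def almostTower (N : Set ℕ → Set ℕ) : Ordinal → Set ℕ :=
  Ordinal.lt_wf.fix fun α T =>
    Classical.epsilon fun B : Set ℕ => B.Infinite ∧ ∀ β (hβ : β < α), (B \ N (T β hβ)).Finite

theorem almostTower_spec {N : Set ℕ → Set ℕ} (hsub : ∀ A, N A ⊆ A)
    (hinf : ∀ A : Set ℕ, A.Infinite → (N A).Infinite) {α : Ordinal} (hα : α < ω₁) :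
    (almostTower N α).Infinite ∧ ∀ β < α, (almostTower N α \ N (almostTower N β)).Finite := by
  induction α using WellFoundedLT.induction with
  | _ α IH =>
  have hchain : ∀ β ∈ Iio α, ∀ γ ∈ Iio α, β ≤ γ →
      (N (almostTower N γ) \ N (almostTower N β)).Finite := by
    intro β hβ γ hγ hle
    rcases hle.eq_or_lt with rfl | hlt
    · simp
    · exact ((IH γ hγ (hγ.trans hα)).2 β hlt).subset (sdiff_subset_sdiff_left (hsub _))
  have hex := exists_infinite_diff_finite_of_countable (countable_Iio_of_lt_omega_one hα)
    (fun β hβ => hinf _ (IH β hβ (lt_trans hβ hα)).1) hchain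
  rw [almostTower, Ordinal.lt_wf.fix_eq]
  exact Classical.epsilon_spec (p := fun B : Set ℕ => B.Infinite ∧ ∀ β (_ : β < α),
    (B \ N (almostTower N β)).Finite) hex

section Kuratowski

variable {X : Type*} [t : TopologicalSpace X] {K : ℕ → Set X} {A : Set ℕ}

theorem kurLi_subset_kurLs (hA : A.Infinite) : kurLi t K A ⊆ kurLs t K A := by
  intro x hx U hU hxU
  refine (hA.sdiff (hx U hU hxU)).mono ?_
  rintro n ⟨hnA, hn⟩
  exact ⟨hnA, nonempty_iff_ne_empty.2 fun he => hn ⟨hnA, he⟩⟩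

theorem exists_isOpen_of_kurLi_ne_kurLs (hA : A.Infinite) (hne : kurLi t K A ≠ kurLs t K A) :
    ∃ U : Set X, IsOpen U ∧ (U ∩ kurLs t K A).Nonempty ∧ {n ∈ A | U ∩ K n = ∅}.Infinite := by
  obtain ⟨x, hxLs, hxLi⟩ := exists_of_ssubset ((kurLi_subset_kurLs hA).ssubset_of_ne hne)
  simp only [kurLi, mem_ofPred_eq, not_forall] at hxLi
  obtain ⟨U, hU, hxU, hinf⟩ := hxLi
  exact ⟨U, hU, ⟨x, hxU, hxLs⟩, hinf⟩

theorem notMem_of_mem_kurLs {x : X} {U : Set X} (hx : x ∈ kurLs t K A) (hU : IsOpen U)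
    (hA : (A \ {n | U ∩ K n = ∅}).Finite) : x ∉ U := fun hxU =>
  hx U hU hxU (hA.subset fun _ ⟨hnA, hn⟩ => ⟨hnA, hn.ne_empty⟩)

end Kuratowski

/-- Every hereditarily Lindelöf space has the generalized Bolzano–Weierstrass
property. -/
theorem stmt13 {X : Type*} [t : TopologicalSpace X]
    (hL : ∀ Y : Set X, IsLindelof Y) (K : ℕ → Set X) :
    ∃ A : Set ℕ, A.Infinite ∧ kurLi t K A = kurLs t K A := by
  by_contra! hcon
  have hU : ∀ A : Set ℕ, ∃ U : Set X, IsOpen U ∧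
      (A.Infinite → (U ∩ kurLs t K A).Nonempty ∧ {n ∈ A | U ∩ K n = ∅}.Infinite) := by
    intro A
    by_cases hA : A.Infinite
    · obtain ⟨U, hU, hUA⟩ := exists_isOpen_of_kurLi_ne_kurLs hA (hcon A hA)
      exact ⟨U, hU, fun _ => hUA⟩
    · exact ⟨∅, isOpen_empty, fun h => absurd h hA⟩
  choose U hUo hUA using hU
  let N : Set ℕ → Set ℕ := fun A => {n ∈ A | U A ∩ K n = ∅}
  let T := almostTower N
  have hT := @almostTower_spec.{0} N (fun A => sep_subset _ _) fun A hA => (hUA A hA).2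
  obtain ⟨α, hα, hαβ⟩ := exists_subset_biUnion_lt_of_isLindelof (fun α => hUo (T α)) (hL _)
  obtain ⟨x, hxU, hxLs⟩ := (hUA (T α) (hT hα).1).1
  obtain ⟨β, hβ, hxβ⟩ := mem_iUnion₂.1 (hαβ hxU)
  exact notMem_of_mem_kurLs hxLs (hUo _) (((hT hα).2 β hβ).subset
    (sdiff_subset_sdiff_right fun n hn => hn.2)) hxβ
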